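/- For m = 2: every feasible set E of a two-machine JIT flow-shop instance admits a JIT schedule in which the jobs of E are processed on both machines M_1 and M_2 in increasing order of their due dates (a permutation schedule following the EDD rule on both machines). -/
import Mathlib


open Finset

/-- A just-in-time flow-shop instance on `m` machines with jobs of type `J`:
`p i j` is the (positive integer) processing time of job `j` on machine `i`,
`d j` its positive integer due date and `w j` its positive integer weight. -/
structure JITInstance (m : ℕ) (J : Type) where
  p : Fin m → J → ℕ
  d : J → ℕ
  w : J → ℕ
  p_pos : ∀ i j, 0 < p i j
  d_pos : ∀ j, 0 < d j
  w_pos : ∀ j, 0 < w j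

/-- `S` is a JIT schedule of the job set `E`: on every machine the processing
intervals `(S i j, S i j + p i j]` of distinct jobs of `E` are pairwise disjoint,
each job's operation on machine `i+1` starts no earlier than its completion on
machine `i`, and every job of `E` completes on the last machine exactly at its
due date.  (Start times are nonnegative automatically, being naturals.) -/
def IsJITSchedule {m : ℕ} {J : Type} (I : JITInstance m J)
    (E : Finset J) (S : Fin m → J → ℕ) : Prop :=
  (∀ i : Fin m, ∀ j ∈ E, ∀ j' ∈ E, j ≠ j' →
      S i j + I.p i j ≤ S i j' ∨ S i j' + I.p i j' ≤ S i j) ∧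
  (∀ j ∈ E, ∀ i i' : Fin m, i'.val = i.val + 1 →
      S i j + I.p i j ≤ S i' j) ∧
  (∀ j ∈ E, ∀ i : Fin m, i.val = m - 1 →
      S i j + I.p i j = I.d j)

/-- A job set is feasible if it admits a JIT schedule. -/
def Feasible {m : ℕ} {J : Type} (I : JITInstance m J) (E : Finset J) : Prop :=
  ∃ S : Fin m → J → ℕ, IsJITSchedule I E S

/-- for `m = 2`, every feasible set admits a permutation JIT
schedule following the EDD rule on both machines: on each machine, distinct
jobs `j, j'` of `E` are processed in increasing order of their due dates. -/
lemma sum_intervals_le {J : Type} (a l : J → ℕ) :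
    ∀ F : Finset J, ∀ T : ℕ,
    (∀ j ∈ F, ∀ j' ∈ F, j ≠ j' → a j + l j ≤ a j' ∨ a j' + l j' ≤ a j) →
    (∀ j ∈ F, 0 < l j) →
    (∀ j ∈ F, a j + l j ≤ T) → ∑ j ∈ F, l j ≤ T := by
  classical
  intro F
  induction F using Finset.strongInduction with
  | _ F ih =>
    intro T hdisj hpos hT
    rcases F.eq_empty_or_nonempty with rfl | hne
    · simp
    · obtain ⟨j₀, hj₀, hmax⟩ := F.exists_max_image a hne
      have hsub : F.erase j₀ ⊂ F := Finset.erase_ssubset hj₀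
      have hrec : ∑ j ∈ F.erase j₀, l j ≤ a j₀ := by
        apply ih _ hsub
        · intro j hj j' hj' hne'
          exact hdisj j (Finset.mem_of_mem_erase hj) j' (Finset.mem_of_mem_erase hj') hne'
        · intro j hj; exact hpos j (Finset.mem_of_mem_erase hj)
        · intro j hj
          have hjF := Finset.mem_of_mem_erase hj
          have hne' : j ≠ j₀ := Finset.ne_of_mem_erase hj
          rcases hdisj j hjF j₀ hj₀ hne' with h | h
          · exact h
          · exfalso
            have h1 := hmax j hjF
            have h2 := hpos j₀ hj₀
            omega
      have := Finset.sum_erase_add F l hj₀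
      have := hT j₀ hj₀
      omega


theorem jit_two_machines_exists_EDD_schedule {J : Type}
    (I : JITInstance 2 J) (E : Finset J) (hE : Feasible I E) :
    ∃ S : Fin 2 → J → ℕ, IsJITSchedule I E S ∧
      ∀ i : Fin 2, ∀ j ∈ E, ∀ j' ∈ E, j ≠ j' →
        (S i j < S i j' ↔ I.d j < I.d j') := by
  classical
  have hfin : ∀ k : Fin 2, k = 0 ∨ k = 1 := by decide
  have h01 : (1 : Fin 2) ≠ 0 := by decide
  obtain ⟨S, h1, h2, h3⟩ := hE
  have hdue : ∀ j ∈ E, S 1 j + I.p 1 j = I.d j := fun j hj => h3 j hj 1 rfl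
  have hprec : ∀ j ∈ E, S 0 j + I.p 0 j ≤ S 1 j := fun j hj => h2 j hj 0 1 rfl
  -- distinct due dates
  have hdistinct : ∀ j ∈ E, ∀ j' ∈ E, j ≠ j' → I.d j ≠ I.d j' := by
    intro j hj j' hj' hne heq
    have hd := hdue j hj
    have hd' := hdue j' hj'
    have hp := I.p_pos 1 j
    have hp' := I.p_pos 1 j'
    rcases h1 1 j hj j' hj' hne with h | h <;> omega
  -- order on machine 2
  have hord : ∀ j ∈ E, ∀ j' ∈ E, I.d j < I.d j' → I.d j ≤ S 1 j' := by
    intro j hj j' hj' hlt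
    have hne : j ≠ j' := by rintro rfl; omega
    have hd := hdue j hj
    have hd' := hdue j' hj'
    have hp' := I.p_pos 1 j'
    rcases h1 1 j hj j' hj' hne with h | h <;> omega
  -- the key bound
  have hkey : ∀ j ∈ E,
      (∑ j' ∈ E.filter (fun j' => I.d j' < I.d j), I.p 0 j') + I.p 0 j ≤ S 1 j := by
    intro j hj
    have hF : ∑ j' ∈ E.filter (fun j' => I.d j' ≤ I.d j), I.p 0 j' ≤ S 1 j := by
      apply sum_intervals_le (S 0) (I.p 0)
      · intro a ha b hb hab
        exact h1 0 a (Finset.mem_filter.mp ha).1 b (Finset.mem_filter.mp hb).1 hab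
      · intro a _; exact I.p_pos 0 a
      · intro a ha
        obtain ⟨haE, hale⟩ := Finset.mem_filter.mp ha
        by_cases hcase : a = j
        · subst hcase; exact hprec a haE
        · have hlt : I.d a < I.d j := lt_of_le_of_ne hale (hdistinct a haE j hj hcase)
          have h1' : I.d a ≤ S 1 j := hord a haE j hj hlt
          have := hprec a haE
          have := hdue a haE
          omega
    have hsub : insert j (E.filter (fun j' => I.d j' < I.d j)) ⊆
        E.filter (fun j' => I.d j' ≤ I.d j) := by
      intro a ha
      rcases Finset.mem_insert.mp ha with rfl | ha
      · exact Finset.mem_filter.mpr ⟨hj, le_refl _⟩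
      · obtain ⟨haE, halt⟩ := Finset.mem_filter.mp ha
        exact Finset.mem_filter.mpr ⟨haE, le_of_lt halt⟩
    have hnotmem : j ∉ E.filter (fun j' => I.d j' < I.d j) := by
      simp [Finset.mem_filter]
    have := Finset.sum_insert (f := I.p 0) hnotmem
    have hle := Finset.sum_le_sum_of_subset (f := I.p 0) hsub
    omega
  -- monotonicity on machine 1
  have hmono : ∀ j ∈ E, ∀ j' ∈ E, I.d j < I.d j' →
      (∑ a ∈ E.filter (fun a => I.d a < I.d j), I.p 0 a) + I.p 0 j ≤
      ∑ a ∈ E.filter (fun a => I.d a < I.d j'), I.p 0 a := by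
    intro j hj j' hj' hlt
    have hsub : insert j (E.filter (fun a => I.d a < I.d j)) ⊆
        E.filter (fun a => I.d a < I.d j') := by
      intro a ha
      rcases Finset.mem_insert.mp ha with rfl | ha
      · exact Finset.mem_filter.mpr ⟨hj, hlt⟩
      · obtain ⟨haE, halt⟩ := Finset.mem_filter.mp ha
        exact Finset.mem_filter.mpr ⟨haE, lt_trans halt hlt⟩
    have hnotmem : j ∉ E.filter (fun a => I.d a < I.d j) := by
      simp [Finset.mem_filter]
    have := Finset.sum_insert (f := I.p 0) hnotmem
    have hle := Finset.sum_le_sum_of_subset (f := I.p 0) hsub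
    omega
  refine ⟨fun i j => if i = 0 then ∑ a ∈ E.filter (fun a => I.d a < I.d j), I.p 0 a
      else S 1 j, ⟨?_, ?_, ?_⟩, ?_⟩
  · -- disjointness
    intro i j hj j' hj' hne
    rcases hfin i with rfl | rfl
    · simp only [if_pos rfl]
      rcases lt_trichotomy (I.d j) (I.d j') with hlt | heq | hgt
      · exact Or.inl (hmono j hj j' hj' hlt)
      · exact absurd heq (hdistinct j hj j' hj' hne)
      · exact Or.inr (hmono j' hj' j hj hgt)
    · simp only [if_neg h01]
      rcases lt_trichotomy (I.d j) (I.d j') with hlt | heq | hgt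
      · left
        have := hord j hj j' hj' hlt
        have := hdue j hj
        omega
      · exact absurd heq (hdistinct j hj j' hj' hne)
      · right
        have := hord j' hj' j hj hgt
        have := hdue j' hj'
        omega
  · -- precedence
    intro j hj i i' hii'
    have hi : i = 0 := by
      have := i.isLt; have := i'.isLt
      exact Fin.ext (by omega)
    have hi' : i' = 1 := by
      have := i.isLt; have := i'.isLt
      exact Fin.ext (by omega)
    subst hi; subst hi'
    simp only [if_pos rfl, if_neg h01]
    exact hkey j hj
  · -- due dates
    intro j hj i hi
    have hi1 : i = 1 := Fin.ext (by simpa using hi)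
    subst hi1
    simp only [if_neg h01]
    exact hdue j hj
  · -- EDD order
    intro i j hj j' hj' hne
    rcases hfin i with rfl | rfl
    · simp only [if_pos rfl, ite_true]
      constructor
      · intro hlt
        rcases lt_trichotomy (I.d j) (I.d j') with h | h | h
        · exact h
        · exact absurd h (hdistinct j hj j' hj' hne)
        · have := hmono j' hj' j hj h
          have := I.p_pos 0 j'
          omega
      · intro h
        have := hmono j hj j' hj' h
        have := I.p_pos 0 j
        omega
    · simp only [if_neg h01]
      constructor
      · intro hlt
        rcases lt_trichotomy (I.d j) (I.d j') with h | h | h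
        · exact h
        · exact absurd h (hdistinct j hj j' hj' hne)
        · have := hord j' hj' j hj h
          have := hdue j' hj'
          have := I.p_pos 1 j'
          omega
      · intro h
        have := hord j hj j' hj' h
        have := hdue j hj
        have := I.p_pos 1 j
        omega
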